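/- arXiv:2201.09080 — 2 statements merged into one kernel-verified Lean document; each statement's English description precedes it below -/
import Mathlib

section
/- (Key step in the proof of F_co ⊆ F_ui) Suppose Gq is bounded and K_q is compact on ℰ_b, and let (A_M)_{M∈ℕ} be measurable subsets of E with A_M ↓ ∅ (decreasing with empty intersection). Then G(1_{A_M} q) → 0 uniformly on E as M → ∞; i.e. sup_{x∈E} ∫_{A_M} G(x,y) q(y) dμ(y) → 0. -/
/-!
Put `L_n := G(1_{A_n} q)`. Since `A_n ↓ ∅` and the measure `G(x,·) q dμ` is finite,
continuity from above gives `L_n → 0` pointwise. Each `L_n = K_q 1_{A_n}` lies in the image of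
the unit ball, which is relatively compact in the complete space of bounded functions with the
uniform metric. Every uniform cluster point of `(L_n)` is also a pointwise one, hence `0`; a
sequence in a compact set with a single cluster point converges to it, so `L_n → 0` uniformly.
-/

open MeasureTheory ENNReal NNReal Filter

/-- `Gop μ G q x = ∫ G(x,y) q(y) dμ(y)`. -/
noncomputable def Gop {E : Type*} [MeasurableSpace E] (μ : Measure E)
    (G : E → E → ℝ≥0∞) (q : E → ℝ≥0∞) (x : E) : ℝ≥0∞ :=
  ∫⁻ y, G x y * q y ∂μ

/-- The kernel operator `K_q f x = ∫ G(x,y) f(y) q(y) dμ(y)` acting on real functions. -/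
noncomputable def Kq {E : Type*} [MeasurableSpace E] (μ : Measure E)
    (G : E → E → ℝ≥0∞) (q : E → ℝ≥0∞) (f : E → ℝ) (x : E) : ℝ :=
  ∫ y, (G x y * q y).toReal * f y ∂μ

/-- Compactness of `K_q` on the space of bounded measurable functions with sup-norm:
the image of the unit ball is totally bounded for the uniformity of uniform convergence. -/
def KqCompact {E : Type*} [MeasurableSpace E] (μ : Measure E)
    (G : E → E → ℝ≥0∞) (q : E → ℝ≥0∞) : Prop :=
  TotallyBounded ((fun f => UniformFun.ofFun (Kq μ G q f)) ''
    {f : E → ℝ | Measurable f ∧ ∀ x, |f x| ≤ 1})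

/-- `q ∈ F_co(G)`: `q` measurable, `Gq` bounded and `K_q` compact on `ℰ_b`. -/
def MemFco {E : Type*} [MeasurableSpace E] (μ : Measure E)
    (G : E → E → ℝ≥0∞) (q : E → ℝ≥0∞) : Prop :=
  Measurable q ∧ (∃ M : ℝ≥0, ∀ x, Gop μ G q x ≤ M) ∧ KqCompact μ G q

/-- `q ∈ F_ui(G)`: `q` measurable and `{G(x,·)q : x ∈ E}` is uniformly integrable. -/
def MemFui {E : Type*} [MeasurableSpace E] (μ : Measure E)
    (G : E → E → ℝ≥0∞) (q : E → ℝ≥0∞) : Prop :=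
  Measurable q ∧ ∀ ε : ℝ≥0∞, 0 < ε → ∃ g : E → ℝ≥0∞, Measurable g ∧
    (∫⁻ y, g y ∂μ) < ⊤ ∧
    ∀ x : E, (∫⁻ y in {y | g y ≤ G x y * q y}, G x y * q y ∂μ) ≤ ε

open Topology

theorem tendstoUniformly_of_tendsto_of_totallyBounded {ι α β : Type*} [UniformSpace β]
    [CompleteSpace β] [T2Space β] {l : Filter ι} {F : ι → α → β} {g : α → β}
    (hF : TotallyBounded (Set.range fun i => UniformFun.ofFun (F i)))
    (hlim : ∀ x, Tendsto (fun i => F i x) l (𝓝 (g x))) : TendstoUniformly F g l := by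
  refine UniformFun.tendsto_iff_tendstoUniformly.1
    ((hF.closure.isCompact_of_isClosed isClosed_closure).tendsto_nhds_of_unique_mapClusterPt
      (Eventually.of_forall fun i => subset_closure (Set.mem_range_self i)) fun c _ hc => ?_)
  funext x
  have hcx : MapClusterPt (UniformFun.toFun c x) l (fun i => F i x) :=
    hc.tendsto_comp ((UniformFun.uniformContinuous_eval β x).continuous.tendsto c)
  exact eq_of_nhds_neBot (hcx.clusterPt.mono (hlim x))

theorem ENNReal.tendsto_iSup_zero_of_tendstoUniformly_toReal {ι α : Type*} {l : Filter ι}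
    {L : ι → α → ℝ≥0∞} (hfin : ∀ i x, L i x ≠ ∞)
    (h : TendstoUniformly (fun i x => (L i x).toReal) 0 l) :
    Tendsto (fun i => ⨆ x, L i x) l (𝓝 0) := by
  rw [ENNReal.tendsto_nhds_zero]
  intro ε hε
  obtain ⟨r, hr, hrε⟩ := ENNReal.lt_iff_exists_nnreal_btwn.1 hε
  filter_upwards [Metric.tendstoUniformly_iff.1 h r (mod_cast hr)] with i hi
  refine iSup_le fun x => le_trans ?_ hrε.le
  have hx := hi x
  rw [Pi.zero_apply, dist_zero_left, Real.norm_of_nonneg toReal_nonneg] at hx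
  simpa using (ENNReal.le_ofReal_iff_toReal_le (hfin i x) r.2).2 hx.le

theorem tendsto_setLIntegral_zero_of_antitone {α ι : Type*} [MeasurableSpace α] {μ : Measure α}
    [Preorder ι] [IsCountablyGenerated (atTop : Filter ι)] {f : α → ℝ≥0∞} {A : ι → Set α}
    (hA : ∀ i, MeasurableSet (A i)) (hmono : Antitone A) (hempty : ⋂ i, A i = ∅)
    (hfin : ∃ i, ∫⁻ x in A i, f x ∂μ ≠ ∞) :
    Tendsto (fun i => ∫⁻ x in A i, f x ∂μ) atTop (𝓝 0) := by
  simp_rw [← withDensity_apply f (hA _)] at hfin ⊢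
  simpa [Function.comp_def, hempty] using
    tendsto_measure_iInter_atTop (fun i => (hA i).nullMeasurableSet) hmono hfin

theorem abs_indicator_one_le_one {α : Type*} (A : Set α) (x : α) :
    |A.indicator (1 : α → ℝ) x| ≤ 1 := by
  by_cases hx : x ∈ A <;> simp [hx]

theorem Kq_indicator_one {E : Type*} [MeasurableSpace E] {μ : Measure E}
    {G : E → E → ℝ≥0∞} {q : E → ℝ≥0∞} {A : Set E} (hA : MeasurableSet A) {x : E}
    (hm : AEMeasurable (fun y => G x y * q y) μ) (hfin : ∫⁻ y in A, G x y * q y ∂μ ≠ ∞) :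
    Kq μ G q (A.indicator 1) x = (∫⁻ y in A, G x y * q y ∂μ).toReal := by
  have hind : (fun y => (G x y * q y).toReal * A.indicator 1 y)
      = A.indicator fun y => (G x y * q y).toReal := by
    funext y
    by_cases hy : y ∈ A <;> simp [hy]
  rw [Kq, hind, integral_indicator hA, integral_toReal hm.restrict (ae_lt_top' hm.restrict hfin)]

/-- key step: if `Gq` is bounded, `K_q` is compact and `A_M ↓ ∅`,
then `sup_x ∫_{A_M} G(x,y) q(y) dμ(y) → 0`. -/
theorem stmt9 {E : Type*} [MeasurableSpace E] (μ : Measure E)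
    (G : E → E → ℝ≥0∞) (hG : Measurable (Function.uncurry G))
    (q : E → ℝ≥0∞) (hq : Measurable q)
    (hM : ∃ M : ℝ≥0, ∀ x, Gop μ G q x ≤ M) (hK : KqCompact μ G q)
    (A : ℕ → Set E) (hAmeas : ∀ n, MeasurableSet (A n))
    (hmono : Antitone A) (hempty : (⋂ n, A n) = ∅) :
    Tendsto (fun n : ℕ => ⨆ x : E, ∫⁻ y in A n, G x y * q y ∂μ)
      atTop (nhds 0) := by
  obtain ⟨M, hGq_le⟩ := hM
  have hGq_meas (x : E) : Measurable fun y => G x y * q y :=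
    (hG.comp measurable_prodMk_left).mul hq
  have hfin (n : ℕ) (x : E) : ∫⁻ y in A n, G x y * q y ∂μ ≠ ∞ :=
    ((setLIntegral_le_lintegral _ _).trans (hGq_le x)).trans_lt coe_lt_top |>.ne
  refine ENNReal.tendsto_iSup_zero_of_tendstoUniformly_toReal hfin
    (tendstoUniformly_of_tendsto_of_totallyBounded (hK.subset ?_) fun x => ?_)
  · rintro _ ⟨n, rfl⟩
    refine ⟨(A n).indicator 1, ⟨measurable_one.indicator (hAmeas n),
      abs_indicator_one_le_one (A n)⟩, ?_⟩
    funext x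
    exact Kq_indicator_one (hAmeas n) (hGq_meas x).aemeasurable (hfin n x)
  · simpa [Function.comp_def] using (ENNReal.tendsto_toReal zero_ne_top).comp
      (tendsto_setLIntegral_zero_of_antitone hAmeas hmono hempty ⟨0, hfin 0 x⟩)
end

section
/- (Translation-invariant uniform integrability step) Let φ : [0,∞) → [0,∞] be measurable with ∫₀^r φ(t) t^{d−1} dt < ∞ for some r > 0, and set f_x(y) := 1_{|y−x|<r} φ(|y−x|) on ℝ^d. Let q : ℝ^d → [0,1] be measurable, integrable, and q(x) → 0 as |x| → ∞. Then the family {f_x q : x ∈ ℝ^d} is uniformly integrable with respect to Lebesgue measure: for every ε > 0 there exists an integrable g ≥ 0 such that ∫_{{f_x q ≥ g}} f_x q dμ ≤ ε for all x. -/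
open MeasureTheory ENNReal NNReal Filter

open Set Metric in
lemma my_lintegral_fun_norm_addHaar {E : Type*} [NormedAddCommGroup E] [NormedSpace ℝ E]
    [MeasurableSpace E] [BorelSpace E] [FiniteDimensional ℝ E] [Nontrivial E]
    (μ : Measure E) [μ.IsAddHaarMeasure] (f : ℝ → ℝ≥0∞) (hf : Measurable f) :
    ∫⁻ x, f ‖x‖ ∂μ
      = μ.toSphere univ *
        ∫⁻ y in Ioi (0:ℝ), ENNReal.ofReal (y ^ (Module.finrank ℝ E - 1)) * f y := by
  have h1 : ∫⁻ x : ({0}ᶜ : Set E), f ‖x.1‖ ∂(μ.comap (↑)) = ∫⁻ x, f ‖x‖ ∂μ := by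
    rw [lintegral_subtype_comap (measurableSet_singleton (0:E)).compl (fun x => f ‖x‖),
      MeasureTheory.restrict_compl_singleton]
  have hm : Measurable fun p : sphere (0:E) 1 × Ioi (0:ℝ) => f p.2.1 := by fun_prop
  have h2 := (Measure.measurePreserving_homeomorphUnitSphereProd μ).lintegral_comp
    (f := fun p : sphere (0:E) 1 × Ioi (0:ℝ) => f p.2.1) hm
  simp only [homeomorphUnitSphereProd_apply_snd_coe] at h2
  rw [← h1, h2, lintegral_prod _ hm.aemeasurable]
  simp only [lintegral_const]
  rw [Measure.volumeIoiPow,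
    lintegral_withDensity_eq_lintegral_mul _ (by fun_prop)
      (by fun_prop : Measurable fun r : Ioi (0:ℝ) => f r.1)]
  simp only [Pi.mul_apply]
  rw [show (fun a : Ioi (0:ℝ) => ENNReal.ofReal (a.1 ^ (Module.finrank ℝ E - 1)) * f a.1)
      = fun a : Ioi (0:ℝ) =>
        (fun y : ℝ => ENNReal.ofReal (y ^ (Module.finrank ℝ E - 1)) * f y) a.1 from rfl,
    mul_comm]
  congr 1
  exact lintegral_subtype_comap measurableSet_Ioi
    (fun y : ℝ => ENNReal.ofReal (y ^ (Module.finrank ℝ E - 1)) * f y)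

/-- translation-invariant uniform integrability step: with
`f_x(y) := 1_{|y-x|<r} φ(|y-x|)` on `ℝ^d`, `∫₀^r φ(t) t^{d-1} dt < ∞`, and
`q : ℝ^d → [0,1]` measurable, integrable and vanishing at infinity, the family
`{f_x q : x ∈ ℝ^d}` is uniformly integrable w.r.t. Lebesgue measure. -/
theorem stmt14 (d : ℕ) (hd : 1 ≤ d)
    (φ : ℝ → ℝ≥0∞) (hφ : Measurable φ) (r : ℝ) (hr : 0 < r)
    (hφint : (∫⁻ t in Set.Ioo (0 : ℝ) r, φ t * ENNReal.ofReal (t ^ (d - 1))) < ⊤)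
    (q : EuclideanSpace ℝ (Fin d) → ℝ≥0∞) (hq : Measurable q)
    (hq1 : ∀ x, q x ≤ 1) (hqint : (∫⁻ y, q y) < ⊤)
    (hq0 : Tendsto q (cocompact (EuclideanSpace ℝ (Fin d))) (nhds 0)) :
    ∀ ε : ℝ≥0∞, 0 < ε →
      ∃ g : EuclideanSpace ℝ (Fin d) → ℝ≥0∞, Measurable g ∧
        (∫⁻ y, g y) < ⊤ ∧
        ∀ x : EuclideanSpace ℝ (Fin d),
          (∫⁻ y in
              {y | g y ≤ (Metric.ball x r).indicator (fun z => φ (dist z x)) y * q y},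
            (Metric.ball x r).indicator (fun z => φ (dist z x)) y * q y) ≤ ε := by
  intro ε hε
  haveI : Nontrivial (EuclideanSpace ℝ (Fin d)) :=
    Module.nontrivial_of_finrank_pos (R := ℝ) (by rw [finrank_euclideanSpace_fin]; omega)
  -- the radial profile and the translate at 0
  set f : ℝ → ℝ≥0∞ := fun t => if t < r then φ t else 0 with hf_def
  have hfm : Measurable f :=
    Measurable.ite (measurableSet_lt measurable_id measurable_const) hφ measurable_const
  set f0 : EuclideanSpace ℝ (Fin d) → ℝ≥0∞ := fun z => f ‖z‖ with hf0_def
  have hf0m : Measurable f0 := hfm.comp measurable_norm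
  have hdim : Module.finrank ℝ (EuclideanSpace ℝ (Fin d)) = d := finrank_euclideanSpace_fin
  -- finiteness of the integral of `f0` via polar coordinates
  have hf0int : ∫⁻ z, f0 z < ⊤ := by
    rw [hf0_def, my_lintegral_fun_norm_addHaar (volume : Measure (EuclideanSpace ℝ (Fin d))) f hfm,
      hdim]
    have heq : ∫⁻ y in Set.Ioi (0:ℝ), ENNReal.ofReal (y ^ (d-1)) * f y
        = ∫⁻ t in Set.Ioo (0:ℝ) r, φ t * ENNReal.ofReal (t ^ (d-1)) := by
      rw [show (fun y : ℝ => ENNReal.ofReal (y ^ (d-1)) * f y)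
          = (Set.Iio r).indicator (fun y => φ y * ENNReal.ofReal (y ^ (d-1))) by
            funext y
            by_cases hy : y < r <;>
              simp [hf_def, hy, Set.indicator_apply, Set.mem_Iio, mul_comm]]
      rw [lintegral_indicator measurableSet_Iio, Measure.restrict_restrict measurableSet_Iio,
        Set.Iio_inter_Ioi]
    rw [heq]
    exact ENNReal.mul_lt_top (measure_lt_top _ _) hφint
  -- Markov: the measure of `{n ≤ f0}` tends to zero
  have hmarkov : Tendsto (fun n : ℕ => volume {z | (n:ℝ≥0∞) ≤ f0 z}) atTop (nhds 0) := by
    have hb : ∀ᶠ n : ℕ in atTop,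
        volume {z | (n:ℝ≥0∞) ≤ f0 z} ≤ (∫⁻ z, f0 z) * ((n:ℝ≥0∞))⁻¹ := by
      filter_upwards [eventually_ge_atTop 1] with n hn
      have hne : ((n:ℝ≥0∞)) ≠ 0 := Nat.cast_ne_zero.mpr (by omega)
      have := meas_ge_le_lintegral_div (μ := volume) hf0m.aemeasurable hne
        (ENNReal.natCast_ne_top n)
      rwa [div_eq_mul_inv] at this
    have hlim : Tendsto (fun n : ℕ => (∫⁻ z, f0 z) * ((n:ℝ≥0∞))⁻¹) atTop (nhds 0) := by
      have := ENNReal.Tendsto.const_mul (a := ∫⁻ z, f0 z)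
        ENNReal.tendsto_inv_nat_nhds_zero (Or.inr hf0int.ne)
      simpa using this
    exact tendsto_of_tendsto_of_tendsto_of_le_of_le' tendsto_const_nhds hlim
      (Eventually.of_forall fun n => zero_le) hb
  have hkey : Tendsto (fun n : ℕ => ∫⁻ z in {z | (n:ℝ≥0∞) ≤ f0 z}, f0 z) atTop (nhds 0) :=
    tendsto_setLIntegral_zero hf0int.ne hmarkov
  obtain ⟨n, hn⟩ : ∃ n : ℕ, ∫⁻ z in {z | (n:ℝ≥0∞) ≤ f0 z}, f0 z ≤ ε :=
    (hkey.eventually (eventually_le_nhds hε)).exists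
  set T : Set (EuclideanSpace ℝ (Fin d)) := {z | (n:ℝ≥0∞) ≤ f0 z} with hT_def
  have hT : MeasurableSet T := measurableSet_le measurable_const hf0m
  refine ⟨fun y => (n:ℝ≥0∞) * q y, hq.const_mul _, ?_, ?_⟩
  · rw [lintegral_const_mul _ hq]
    exact ENNReal.mul_lt_top (ENNReal.natCast_lt_top n) hqint
  intro x
  set F : EuclideanSpace ℝ (Fin d) → ℝ≥0∞ :=
    fun y => (Metric.ball x r).indicator (fun z => φ (dist z x)) y with hF_def
  have hFm : Measurable F :=
    ((hφ.comp (measurable_id.dist measurable_const)).indicator measurableSet_ball)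
  have hFx : ∀ y, F y = f0 (y - x) := by
    intro y
    have h0 : f0 (y - x) = if dist y x < r then φ (dist y x) else 0 := by
      simp only [hf0_def, hf_def, ← dist_eq_norm]
    rw [h0, hF_def]
    show (Metric.ball x r).indicator (fun z => φ (dist z x)) y = _
    by_cases h : dist y x < r
    · rw [Set.indicator_of_mem (Metric.mem_ball.mpr h), if_pos h]
    · rw [Set.indicator_of_notMem (fun hc => h (Metric.mem_ball.mp hc)), if_neg h]
  set S : Set (EuclideanSpace ℝ (Fin d)) := {y | (n:ℝ≥0∞) * q y ≤ F y * q y} with hS_def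
  have hS : MeasurableSet S := measurableSet_le (hq.const_mul _) (hFm.mul hq)
  have claim : ∀ y, S.indicator (fun y => F y * q y) y ≤ T.indicator f0 (y - x) := by
    intro y
    by_cases hyS : y ∈ S
    · rw [Set.indicator_of_mem hyS]
      by_cases hqy : q y = 0
      · simp [hqy]
      · have hqt : q y ≠ ⊤ := ((hq1 y).trans_lt one_lt_top).ne
        have h1 : (n:ℝ≥0∞) ≤ f0 (y - x) := by
          have h2 : (n:ℝ≥0∞) * q y ≤ f0 (y - x) * q y := by
            have := hyS; rw [hS_def] at this; simpa [hFx y] using this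
          exact (ENNReal.mul_le_mul_iff_left hqy hqt).mp h2
        have hmem : y - x ∈ T := h1
        rw [Set.indicator_of_mem hmem, hFx y]
        calc f0 (y-x) * q y ≤ f0 (y-x) * 1 := mul_le_mul_right (hq1 y) _
          _ = f0 (y-x) := mul_one _
    · rw [Set.indicator_of_notMem hyS]; exact zero_le
  calc ∫⁻ y in S, F y * q y
      = ∫⁻ y, S.indicator (fun y => F y * q y) y := (lintegral_indicator hS _).symm
    _ ≤ ∫⁻ y, T.indicator f0 (y - x) := lintegral_mono claim
    _ = ∫⁻ z, T.indicator f0 z := by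
        simp_rw [sub_eq_add_neg]
        exact lintegral_add_right_eq_self (T.indicator f0) (-x)
    _ = ∫⁻ z in T, f0 z := lintegral_indicator hT _
    _ ≤ ε := hn
end
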